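/- arXiv:1904.02031 — 2 statements merged into one kernel-verified Lean document; each statement's English description precedes it below -/
import Mathlib

section
/- Let W be a real b×n matrix with W^T·e_b = 0, δ > 0, ε = √(bδ). Define blocks A = λ₂·I_b - (λ₂/(2b))·J_b + F·i with F = T - √(δ/b)·(W·J_{n×b} + J_{b×n}·W^T) for a given real symmetric matrix T, B = -δ·J_{b×n} + ε·W·i, C = δb·I_n. Then the imaginary part of the Schur complement A - B C⁻¹ B^T equals T. -/
open Matrix

/-! Write `B = X + iY` with `X = -δ J` and `Y = ε W` real. Since `C` is the scalar `δb`, the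
imaginary part of `B C⁻¹ Bᵀ` is `(X Yᵀ + Y Xᵀ) / (δb) = -(ε / b) (J Wᵀ + W Jᵀ)`, and
`ε / b = √(bδ) / b = √(δ / b)`; so subtracting it from `Im A = F` cancels exactly the correction
that `F` adds to `T`. -/

theorem Real.sqrt_mul_div_left (b δ : ℝ) (hb : 0 ≤ b) : √(b * δ) / b = √(δ / b) := by
  rcases hb.eq_or_lt with rfl | hb
  · simp
  have : √b ≠ 0 := by positivity
  rw [Real.sqrt_mul hb.le, Real.sqrt_div' _ hb.le]
  nth_rw 2 [← Real.mul_self_sqrt hb.le]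
  field_simp

namespace Matrix

theorem inv_smul_one {n K : Type*} [Fintype n] [DecidableEq n] [Field K] (c : K) :
    (c • (1 : Matrix n n K))⁻¹ = c⁻¹ • 1 := by
  rcases eq_or_ne c 0 with rfl | hc
  · simp
  exact inv_eq_left_inv (by rw [smul_mul_smul_comm, inv_mul_cancel₀ hc, one_mul, one_smul])

open Complex

variable {l m n : Type*}

theorem map_im_sub_ofReal_smul (A M : Matrix m n ℂ) (c : ℝ) :
    (A - (c : ℂ) • M).map im = A.map im - c • M.map im := by
  ext i j; simp

theorem transpose_ofReal_add_I_smul (X Y : Matrix m n ℝ) :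
    (X.map ofReal + I • Y.map ofReal)ᵀ = Xᵀ.map ofReal + I • Yᵀ.map ofReal := by
  simp [transpose_map]

theorem map_im_ofReal_add_I_smul_mul [Fintype m] (X Y : Matrix l m ℝ) (U V : Matrix m n ℝ) :
    ((X.map ofReal + I • Y.map ofReal) * (U.map ofReal + I • V.map ofReal)).map im =
      X * V + Y * U := by
  ext i j; simp [mul_apply, im_sum, Finset.sum_add_distrib]

theorem map_im_sub_mul_smul_one_inv_mul_transpose [Fintype n] [DecidableEq n]
    (A : Matrix m m ℂ) (X Y : Matrix m n ℝ) (c : ℝ) :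
    (A - (X.map ofReal + I • Y.map ofReal) * ((c : ℂ) • (1 : Matrix n n ℂ))⁻¹ *
        (X.map ofReal + I • Y.map ofReal)ᵀ).map im =
      A.map im - c⁻¹ • (X * Yᵀ + Y * Xᵀ) := by
  rw [inv_smul_one, Matrix.mul_smul, Matrix.mul_one, Matrix.smul_mul, ← ofReal_inv,
    map_im_sub_ofReal_smul, transpose_ofReal_add_I_smul, map_im_ofReal_add_I_smul_mul]

end Matrix

theorem imaginary_part_of_schur_complement_general {b n : ℕ}
    (W : Matrix (Fin b) (Fin n) ℝ)
    (lam2 : ℝ)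
    (δ ε : ℝ) (hδ : 0 < δ) (hε : ε = Real.sqrt (b * δ))
    (T : Matrix (Fin b) (Fin b) ℝ)
    (F : Matrix (Fin b) (Fin b) ℝ)
    (hF : F = T - Real.sqrt (δ / b) •
        (W * (Matrix.of fun _ _ => (1 : ℝ)) + (Matrix.of fun _ _ => (1 : ℝ)) * Wᵀ))
    (A : Matrix (Fin b) (Fin b) ℂ)
    (hA : A = (lam2 : ℂ) • (1 : Matrix (Fin b) (Fin b) ℂ)
        - ((lam2 / (2 * b) : ℝ) : ℂ) • (Matrix.of fun _ _ => (1 : ℂ))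
        + Complex.I • (F.map (Complex.ofReal)))
    (B : Matrix (Fin b) (Fin n) ℂ)
    (hB : B = -((δ : ℂ) • (Matrix.of fun _ _ => (1 : ℂ)))
        + Complex.I • ((ε : ℂ) • (W.map (Complex.ofReal))))
    (C : Matrix (Fin n) (Fin n) ℂ)
    (hC : C = ((δ * b : ℝ) : ℂ) • (1 : Matrix (Fin n) (Fin n) ℂ)) :
    (Matrix.of fun i j => ((A - B * C⁻¹ * Bᵀ) i j).im) = T := by
  set J : Matrix (Fin b) (Fin n) ℝ := of fun _ _ => 1
  set J' : Matrix (Fin n) (Fin b) ℝ := of fun _ _ => 1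
  have hJ : Jᵀ = J' := rfl
  -- In `hF` the factors `of fun _ _ => 1` have implicit sizes, so `*` elaborates through the
  -- default `HMul` instance of `CStarMatrix`; restating it with sized factors uses `Matrix`'s.
  have hF' : F = T - √(δ / b) • (W * J' + J * Wᵀ) := hF
  have hImA : A.map Complex.im = F := by
    rw [hA]; ext i j; simp [one_apply, apply_ite, -Complex.ofReal_div]
  have hB' : B = (-δ • J).map Complex.ofReal + Complex.I • (ε • W).map Complex.ofReal := by
    rw [hB]; ext i j; simp [J]
  have hscalar : (δ * b)⁻¹ * (δ * ε) = √(δ / b) := by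
    rw [mul_inv, mul_mul_mul_comm, inv_mul_cancel₀ hδ.ne', one_mul, inv_mul_eq_div, hε,
      Real.sqrt_mul_div_left _ _ b.cast_nonneg]
  change (A - B * C⁻¹ * Bᵀ).map Complex.im = T
  rw [hC, hB', map_im_sub_mul_smul_one_inv_mul_transpose, hImA, hF']
  simp only [transpose_smul, hJ, Matrix.smul_mul, Matrix.mul_smul, smul_smul, smul_add]
  rw [← hscalar]
  module

theorem imaginary_part_of_schur_complement {b n : ℕ} (hb : 0 < b) (hn : 0 < n)
    (W : Matrix (Fin b) (Fin n) ℝ) (hW : Wᵀ.mulVec 1 = 0)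
    (lam2 : ℝ) (hlam2 : 0 < lam2)
    (δ ε : ℝ) (hδ : 0 < δ) (hε : ε = Real.sqrt (b * δ))
    (T : Matrix (Fin b) (Fin b) ℝ) (hT : Tᵀ = T)
    (F : Matrix (Fin b) (Fin b) ℝ)
    (hF : F = T - Real.sqrt (δ / b) •
        (W * (Matrix.of fun _ _ => (1 : ℝ)) + (Matrix.of fun _ _ => (1 : ℝ)) * Wᵀ))
    (A : Matrix (Fin b) (Fin b) ℂ)
    (hA : A = (lam2 : ℂ) • (1 : Matrix (Fin b) (Fin b) ℂ)
        - ((lam2 / (2 * b) : ℝ) : ℂ) • (Matrix.of fun _ _ => (1 : ℂ))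
        + Complex.I • (F.map (Complex.ofReal)))
    (B : Matrix (Fin b) (Fin n) ℂ)
    (hB : B = -((δ : ℂ) • (Matrix.of fun _ _ => (1 : ℂ)))
        + Complex.I • ((ε : ℂ) • (W.map (Complex.ofReal))))
    (C : Matrix (Fin n) (Fin n) ℂ)
    (hC : C = ((δ * b : ℝ) : ℂ) • (1 : Matrix (Fin n) (Fin n) ℂ)) :
    (Matrix.of fun i j => ((A - B * C⁻¹ * Bᵀ) i j).im) = T :=
  imaginary_part_of_schur_complement_general W lam2 δ ε hδ hε T F hF A hA B hB C hC
end

section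
/- For a connected network with complex symmetric conductance c_{uv} (Re c_{uv} > 0) and a nonempty set of boundary nodes, for any assignment of complex voltages to the boundary nodes there exists a unique extension of the voltage function to all nodes satisfying the equilibrium condition ∑_{w} c_{uw}(V_u - V_w) = 0 at every interior node u. -/
/-!
Both existence and uniqueness follow, by finite dimensionality, from injectivity of the linear map
sending `f` to its boundary values and its Laplacian at interior nodes. If `f` vanishes on the
boundary and is harmonic inside, then `∑ u, conj (f u) * laplacian c f u = 0`, and summation by parts turns
this into `∑ u w, Re c u w * |f u - f w|² = 0`. So `f` is constant along every edge, hence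
constant on the connected network, hence zero.
-/

open Matrix

open ComplexConjugate

theorem SimpleGraph.Reachable.eq_of_forall_adj {V β : Type*} {G : SimpleGraph V} {f : V → β}
    (hf : ∀ u v, G.Adj u v → f u = f v) {u v : V} (h : G.Reachable u v) : f u = f v := by
  simpa [Relation.reflTransGen_eq_self] using
    ((SimpleGraph.reachable_iff_reflTransGen u v).mp h).lift f hf

namespace Network

variable {V : Type*} [Fintype V] (c : V → V → ℂ)

def laplacian : (V → ℂ) →ₗ[ℂ] V → ℂ where
  toFun f u := ∑ w, c u w * (f u - f w)
  map_add' f₁ f₂ := by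
    ext u
    simp only [Pi.add_apply, ← Finset.sum_add_distrib]
    exact Finset.sum_congr rfl fun w _ => by ring
  map_smul' a f := by
    ext u
    simp only [Pi.smul_apply, smul_eq_mul, RingHom.id_apply, Finset.mul_sum]
    exact Finset.sum_congr rfl fun w _ => by ring

theorem laplacian_apply (f : V → ℂ) (u : V) : laplacian c f u = ∑ w, c u w * (f u - f w) := rfl

variable {c}

theorem two_mul_sum_conj_mul_laplacian (hsymm : ∀ u v, c u v = c v u) (f : V → ℂ) :
    2 * ∑ u, conj (f u) * laplacian c f u = ∑ u, ∑ w, c u w * Complex.normSq (f u - f w) := by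
  have hswap : ∑ u, ∑ w, c u w * conj (f u) * (f u - f w)
      = ∑ u, ∑ w, c u w * conj (f w) * (f w - f u) := by
    rw [Finset.sum_comm]
    exact Finset.sum_congr rfl fun u _ => Finset.sum_congr rfl fun w _ => by rw [hsymm]
  calc 2 * ∑ u, conj (f u) * laplacian c f u
      = ∑ u, ∑ w, c u w * conj (f u) * (f u - f w)
        + ∑ u, ∑ w, c u w * conj (f w) * (f w - f u) := by
        rw [← hswap, two_mul]
        simp only [laplacian_apply, Finset.mul_sum]
        congr 1 <;> exact Finset.sum_congr rfl fun u _ => Finset.sum_congr rfl fun w _ => by ring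
    _ = ∑ u, ∑ w, c u w * Complex.normSq (f u - f w) := by
        simp only [← Finset.sum_add_distrib, Complex.normSq_eq_conj_mul_self, map_sub]
        exact Finset.sum_congr rfl fun u _ => Finset.sum_congr rfl fun w _ => by ring

theorem eq_of_sum_conj_mul_laplacian_eq_zero (hsymm : ∀ u v, c u v = c v u)
    (hpos : ∀ u v, c u v ≠ 0 → 0 < (c u v).re) {f : V → ℂ}
    (hf : ∑ u, conj (f u) * laplacian c f u = 0) {u w : V} (huw : c u w ≠ 0) : f u = f w := by
  have hnonneg : ∀ u w, 0 ≤ (c u w).re * Complex.normSq (f u - f w) := fun u w => by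
    by_cases h : c u w = 0
    · simp [h]
    · exact mul_nonneg (hpos u w h).le (Complex.normSq_nonneg _)
  have henergy : ∑ u, ∑ w, (c u w).re * Complex.normSq (f u - f w) = 0 := by
    have := congrArg Complex.re (two_mul_sum_conj_mul_laplacian hsymm f)
    simpa [hf, Complex.re_sum, Complex.re_mul_ofReal] using this.symm
  have hterm : (c u w).re * Complex.normSq (f u - f w) = 0 :=
    (Finset.sum_eq_zero_iff_of_nonneg fun w _ => hnonneg u w).mp
      ((Finset.sum_eq_zero_iff_of_nonneg fun u _ => Finset.sum_nonneg fun w _ => hnonneg u w).mp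
        henergy u (Finset.mem_univ u)) w (Finset.mem_univ w)
  rw [mul_eq_zero, Complex.normSq_eq_zero, sub_eq_zero] at hterm
  exact hterm.resolve_left (hpos u w huw).ne'

theorem eq_zero_of_boundary_eq_zero (hsymm : ∀ u v, c u v = c v u)
    (hpos : ∀ u v, c u v ≠ 0 → 0 < (c u v).re)
    (hconn : (SimpleGraph.fromRel fun u v => c u v ≠ 0).Connected)
    {Bd : Set V} (hBd : Bd.Nonempty) {f : V → ℂ} (hb : ∀ u ∈ Bd, f u = 0)
    (he : ∀ u ∉ Bd, laplacian c f u = 0) : f = 0 := by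
  have henergy : ∑ u, conj (f u) * laplacian c f u = 0 := Finset.sum_eq_zero fun u _ => by
    by_cases hu : u ∈ Bd
    · simp [hb u hu]
    · simp [he u hu]
  have hadj : ∀ u w, (SimpleGraph.fromRel fun u v => c u v ≠ 0).Adj u w → f u = f w := by
    rintro u w ⟨-, huw | hwu⟩
    · exact eq_of_sum_conj_mul_laplacian_eq_zero hsymm hpos henergy huw
    · exact eq_of_sum_conj_mul_laplacian_eq_zero hsymm hpos henergy (hsymm u w ▸ hwu)
  obtain ⟨b, hb'⟩ := hBd
  ext u
  rw [(hconn u b).eq_of_forall_adj hadj, hb b hb', Pi.zero_apply]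

variable (c) in
noncomputable def dirichletMap (Bd : Set V) : (V → ℂ) →ₗ[ℂ] V → ℂ :=
  open Classical in
  LinearMap.pi fun u => if u ∈ Bd then LinearMap.proj u else LinearMap.proj u ∘ₗ laplacian c

theorem dirichletMap_eq_iff {Bd : Set V} [DecidablePred (· ∈ Bd)] {f g : V → ℂ} :
    dirichletMap c Bd f = Bd.piecewise g 0 ↔
      (∀ u ∈ Bd, f u = g u) ∧ ∀ u ∉ Bd, laplacian c f u = 0 := by
  simp only [funext_iff]
  constructor
  · intro h
    refine ⟨fun u hu => ?_, fun u hu => ?_⟩ <;> simpa [dirichletMap, hu] using h u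
  · rintro ⟨hb, hi⟩ u
    by_cases hu : u ∈ Bd <;> simp [dirichletMap, hu, hb, hi]

theorem dirichletMap_bijective (hsymm : ∀ u v, c u v = c v u)
    (hpos : ∀ u v, c u v ≠ 0 → 0 < (c u v).re)
    (hconn : (SimpleGraph.fromRel fun u v => c u v ≠ 0).Connected)
    {Bd : Set V} (hBd : Bd.Nonempty) : Function.Bijective (dirichletMap c Bd) := by
  classical
  have hinj : Function.Injective (dirichletMap c Bd) := by
    rw [← LinearMap.ker_eq_bot, LinearMap.ker_eq_bot']
    intro f hf
    have := (dirichletMap_eq_iff (g := 0)).mp (by rw [hf, Set.piecewise_same])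
    exact eq_zero_of_boundary_eq_zero hsymm hpos hconn hBd this.1 this.2
  exact ⟨hinj, LinearMap.injective_iff_surjective.mp hinj⟩

end Network

theorem equilibrium_voltage_exists_unique_general {V : Type*} [Fintype V]
    (c : V → V → ℂ)
    (hsymm : ∀ u v, c u v = c v u)
    (hpos : ∀ u v, c u v ≠ 0 → 0 < (c u v).re)
    (hconn : (SimpleGraph.fromRel fun u v => c u v ≠ 0).Connected)
    (Bd : Set V) (hBd : Bd.Nonempty)
    (g : V → ℂ) :
    ∃! f : V → ℂ,
      (∀ u ∈ Bd, f u = g u) ∧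
      (∀ u ∉ Bd, ∑ w, c u w * (f u - f w) = 0) := by
  classical
  simpa only [Network.dirichletMap_eq_iff, Network.laplacian_apply] using
    (Network.dirichletMap_bijective hsymm hpos hconn hBd).existsUnique (Bd.piecewise g 0)

theorem equilibrium_voltage_exists_unique {V : Type*} [Fintype V] [DecidableEq V]
    (c : V → V → ℂ)
    (hsymm : ∀ u v, c u v = c v u)
    (hloop : ∀ u, c u u = 0)
    (hpos : ∀ u v, c u v ≠ 0 → 0 < (c u v).re)
    (hconn : (SimpleGraph.fromRel fun u v => c u v ≠ 0).Connected)
    (Bd : Set V) (hBd : Bd.Nonempty)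
    (g : V → ℂ) :
    ∃! f : V → ℂ,
      (∀ u ∈ Bd, f u = g u) ∧
      (∀ u ∉ Bd, ∑ w, c u w * (f u - f w) = 0) :=
  equilibrium_voltage_exists_unique_general c hsymm hpos hconn Bd hBd g
end
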